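/- arXiv:1302.2675 — 2 statements merged into one kernel-verified Lean document; each statement's English description precedes it below -/
import Mathlib

section
/- Among the accepting paths of a run DAG G (if any exist), there is one whose profile is lexicographically maximal: if the set P of accepting paths of G is nonempty, then there exists π ∈ P such that for all π' ∈ P, h_{π'} ≤ h_π in the lexicographic order on infinite 0-1 sequences. -/
/-- Strict lexicographic order on finite 0-1 profiles. -/
def ProfLt (a b : List Bool) : Prop := List.Lex (· < ·) a b

/-- Non-strict lexicographic order on finite 0-1 profiles. -/
def ProfLe (a b : List Bool) : Prop := a = b ∨ ProfLt a b

/-- A nondeterministic Büchi automaton on infinite words. -/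
structure NBW (Q : Type) (σ : Type) where
  init : Set Q
  trans : Q → σ → Set Q
  acc : Q → Bool

namespace NBW

variable {Q σ : Type} (A : NBW Q σ) (w : ℕ → σ)

/-- `(q,i)` is a vertex of the run DAG of `A` on `w`. -/
def InDag (v : Q × ℕ) : Prop :=
  ∃ p : ℕ → Q, p 0 ∈ A.init ∧ (∀ j, j < v.2 → p (j + 1) ∈ A.trans (p j) (w j)) ∧ p v.2 = v.1

/-- Edge of the run DAG. -/
def Edge (u v : Q × ℕ) : Prop :=
  A.InDag w u ∧ v.2 = u.2 + 1 ∧ v.1 ∈ A.trans u.1 (w u.2)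

/-- An infinite initial path through the (sub-)DAG with edge relation `E`. -/
def IsPath (E : Q × ℕ → Q × ℕ → Prop) (π : ℕ → Q × ℕ) : Prop :=
  (π 0).1 ∈ A.init ∧ (π 0).2 = 0 ∧ ∀ i, E (π i) (π (i + 1))

/-- An accepting path: initial and visiting F-nodes infinitely often. -/
def AcceptingPath (E : Q × ℕ → Q × ℕ → Prop) (π : ℕ → Q × ℕ) : Prop :=
  A.IsPath E π ∧ ∀ N, ∃ i, N ≤ i ∧ A.acc (π i).1 = true

/-- Profile (sequence of acceptance labels) of the first `i+1` states of `p`. -/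
def profileOf (p : ℕ → Q) (i : ℕ) : List Bool :=
  (List.range (i + 1)).map fun j => A.acc (p j)

/-- `p` encodes a finite initial run ending at node `v`. -/
def FinRunTo (p : ℕ → Q) (v : Q × ℕ) : Prop :=
  p 0 ∈ A.init ∧ (∀ j, j < v.2 → p (j + 1) ∈ A.trans (p j) (w j)) ∧ p v.2 = v.1

/-- `h` assigns to each node the lexicographically maximal profile
over all finite initial runs to it. -/
def IsProfileFun (h : Q × ℕ → List Bool) : Prop :=
  ∀ v, A.InDag w v →
    (∃ p, A.FinRunTo w p v ∧ A.profileOf p v.2 = h v) ∧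
    ∀ p, A.FinRunTo w p v → ProfLe (A.profileOf p v.2) (h v)

/-- Edges of the pruned DAG `G'`: only edges from predecessors of
lexicographically maximal profile are kept. -/
def Edge' (h : Q × ℕ → List Bool) (u v : Q × ℕ) : Prop :=
  A.Edge w u v ∧ ∀ u', A.Edge w u' v → ¬ ProfLt (h u) (h u')

/-- `v` is finite in `G'`: it has finitely many descendants in `G'`. -/
def FiniteIn' (h : Q × ℕ → List Bool) (v : Q × ℕ) : Prop :=
  Set.Finite {u | Relation.ReflTransGen (A.Edge' w h) v u}

/-- Vertices of `G''`: vertices of the run DAG that are not finite in `G'`. -/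
def InDag'' (h : Q × ℕ → List Bool) (v : Q × ℕ) : Prop :=
  A.InDag w v ∧ ¬ A.FiniteIn' w h v

/-- Edges of `G''`. -/
def Edge'' (h : Q × ℕ → List Bool) (u v : Q × ℕ) : Prop :=
  A.Edge' w h u v ∧ A.InDag'' w h u ∧ A.InDag'' w h v

/-- `lam` is the retrospective labeling `λ^k`: ⊤ at levels ≤ k, ⊥ on F-nodes
after level k, inherited along `G'`-edges otherwise. -/
def IsRetroLabeling (h : Q × ℕ → List Bool) (k : ℕ) (lam : Q × ℕ → Bool) : Prop :=
  (∀ u, A.InDag w u → u.2 ≤ k → lam u = true) ∧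
  (∀ u, A.InDag w u → k < u.2 → A.acc u.1 = true → lam u = false) ∧
  (∀ u v, k < v.2 → A.acc v.1 = false → A.Edge' w h u v → lam v = lam u)

/-- A labeling is legal when every ⊥-labeled node is finite in `G'`. -/
def Legal (h : Q × ℕ → List Bool) (lam : Q × ℕ → Bool) : Prop :=
  ∀ u, A.InDag w u → lam u = false → A.FiniteIn' w h u

/-- `α(u)`: the number of ⊤-labeled profile-equivalence classes on `u`'s level
whose profile is strictly greater than `h u`. -/
noncomputable def alphaCount (h : Q × ℕ → List Bool) (lam : Q × ℕ → Bool) (u : Q × ℕ) : ℕ :=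
  Set.ncard {p : List Bool | ∃ v, A.InDag w v ∧ v.2 = u.2 ∧ lam v = true ∧ h v = p ∧ ProfLt (h u) p}

/-- The `k`-retrospective ranking (with top rank `m`). -/
noncomputable def retroRank (h : Q × ℕ → List Bool) (lam : Q × ℕ → Bool) (k m : ℕ)
    (u : Q × ℕ) : ℕ :=
  if u.2 ≤ k then m
  else if lam u then 2 * A.alphaCount w h lam u + 1 else 2 * A.alphaCount w h lam u

/-- `m = 2 |Q \ F|`. -/
def mBound [Fintype Q] : ℕ :=
  2 * Finset.card (Finset.univ.filter fun q => A.acc q = false)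

end NBW

/-!
Choose a profile greedily: bit `n` is `true` iff some accepting profile that agrees with the bits
already chosen has a `true` at `n`. This sequence dominates every accepting profile
lexicographically, and each of its prefixes is a prefix of an accepting profile, so it lies in the
closure of the accepting profiles. As `ℕ → Q` is compact (König's lemma), it is then the profile of
a run that is a limit of accepting runs. That run is accepting: were the greedy sequence eventually
`false`, an accepting profile agreeing with it long enough would have to agree with it forever.
-/

open Filter

open Classical in
noncomputable def lexGreedy (S : Set (ℕ → Bool)) (n : ℕ) : Bool :=
  decide (∃ f ∈ S, (∀ m < n, f m = lexGreedy S m) ∧ f n = true)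

section LexGreedy

variable {S : Set (ℕ → Bool)} {f : ℕ → Bool} {n : ℕ}

theorem lexGreedy_eq_true_iff :
    lexGreedy S n = true ↔ ∃ f ∈ S, (∀ m < n, f m = lexGreedy S m) ∧ f n = true := by
  rw [lexGreedy]
  exact @decide_eq_true_iff _ (Classical.dec _)

theorem apply_eq_false_of_lexGreedy_eq_false (hf : f ∈ S) (hagree : ∀ m < n, f m = lexGreedy S m)
    (hn : lexGreedy S n = false) : f n = false :=
  Bool.eq_false_iff.2 fun hfn => by simpa [hn] using lexGreedy_eq_true_iff.2 ⟨f, hf, hagree, hfn⟩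

theorem toLex_le_lexGreedy (hf : f ∈ S) : toLex f ≤ toLex (lexGreedy S) := by
  refine not_lt.1 fun ⟨n, hagree, hlt⟩ => ?_
  obtain ⟨hgreedy, hfn⟩ : lexGreedy S n = false ∧ f n = true := Bool.lt_iff.1 hlt
  simpa [hfn] using
    apply_eq_false_of_lexGreedy_eq_false hf (fun m hm => (hagree m hm).symm) hgreedy

theorem exists_mem_agree_lexGreedy (hS : S.Nonempty) (n : ℕ) :
    ∃ f ∈ S, ∀ m < n, f m = lexGreedy S m := by
  induction n with
  | zero => exact hS.imp fun f hf => ⟨hf, by simp⟩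
  | succ n ih =>
    obtain ⟨f, hf, hagree⟩ := ih
    cases hn : lexGreedy S n with
    | true =>
      obtain ⟨g, hg, hgagree, hgn⟩ := lexGreedy_eq_true_iff.1 hn
      refine ⟨g, hg, fun m hm => (Nat.lt_succ_iff_lt_or_eq.1 hm).elim (hgagree m) ?_⟩
      rintro rfl
      exact hgn.trans hn.symm
    | false =>
      refine ⟨f, hf, fun m hm => (Nat.lt_succ_iff_lt_or_eq.1 hm).elim (hagree m) ?_⟩
      rintro rfl
      exact (apply_eq_false_of_lexGreedy_eq_false hf hagree hn).trans hn.symm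

theorem lexGreedy_mem_closure (hS : S.Nonempty) : lexGreedy S ∈ closure S := by
  choose f hfS hagree using exists_mem_agree_lexGreedy hS
  refine mem_closure_of_tendsto (tendsto_pi_nhds.2 fun i => ?_)
    (Eventually.of_forall (f := atTop) hfS)
  exact tendsto_const_nhds.congr' ((eventually_gt_atTop i).mono fun n hn => (hagree n i hn).symm)

theorem frequently_lexGreedy (hS : S.Nonempty) (hfreq : ∀ f ∈ S, ∃ᶠ n in atTop, f n = true) :
    ∃ᶠ n in atTop, lexGreedy S n = true := by
  intro hev
  obtain ⟨N, hN⟩ := eventually_atTop.1 hev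
  obtain ⟨f, hf, hagree⟩ := exists_mem_agree_lexGreedy hS N
  have hfeq : ∀ n, f n = lexGreedy S n := fun n => by
    induction n using Nat.strong_induction_on with
    | _ n ih =>
      rcases lt_or_ge n N with hn | hn
      · exact hagree n hn
      · have hfalse : lexGreedy S n = false := Bool.eq_false_iff.2 (hN n hn)
        rw [hfalse]
        exact apply_eq_false_of_lexGreedy_eq_false hf ih hfalse
  exact hfreq f hf (hev.mono fun n hn => by simpa [hfeq] using hn)

end LexGreedy

namespace NBW

variable {Q σ : Type} (A : NBW Q σ) (w : ℕ → σ)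

def IsRun (p : ℕ → Q) : Prop :=
  p 0 ∈ A.init ∧ ∀ i, p (i + 1) ∈ A.trans (p i) (w i)

def IsAcceptingRun (p : ℕ → Q) : Prop :=
  A.IsRun w p ∧ ∃ᶠ i in atTop, A.acc (p i) = true

def profile (p : ℕ → Q) (i : ℕ) : Bool := A.acc (p i)

variable {A w}

theorem IsRun.inDag {p : ℕ → Q} (hp : A.IsRun w p) (i : ℕ) : A.InDag w (p i, i) :=
  ⟨p, hp.1, fun j _ => hp.2 j, rfl⟩

theorem IsPath.snd_eq {π : ℕ → Q × ℕ} (hπ : A.IsPath (A.Edge w) π) (i : ℕ) : (π i).2 = i := by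
  induction i with
  | zero => exact hπ.2.1
  | succ i ih => rw [(hπ.2.2 i).2.1, ih]

theorem isPath_edge_iff {π : ℕ → Q × ℕ} :
    A.IsPath (A.Edge w) π ↔ A.IsRun w (fun i => (π i).1) ∧ ∀ i, (π i).2 = i := by
  refine ⟨fun hπ => ⟨⟨hπ.1, fun i => ?_⟩, hπ.snd_eq⟩, fun ⟨hp, hlev⟩ => ⟨hp.1, hlev 0, fun i => ?_⟩⟩
  · simpa [hπ.snd_eq i] using (hπ.2.2 i).2.2
  · have hπi : π i = ((π i).1, i) := Prod.ext rfl (hlev i)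
    refine ⟨hπi ▸ hp.inDag i, by rw [hlev, hlev], ?_⟩
    simpa [hlev i] using hp.2 i

theorem acceptingPath_edge_iff {π : ℕ → Q × ℕ} :
    A.AcceptingPath (A.Edge w) π ↔
      A.IsAcceptingRun w (fun i => (π i).1) ∧ ∀ i, (π i).2 = i := by
  rw [AcceptingPath, isPath_edge_iff, IsAcceptingRun, frequently_atTop]
  tauto

theorem isClosed_setOf_isRun [TopologicalSpace Q] [DiscreteTopology Q] :
    IsClosed {p : ℕ → Q | A.IsRun w p} := by
  simp only [IsRun, Set.ofPred_and, Set.ofPred_forall]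
  refine ((isClosed_discrete _).preimage (continuous_apply 0)).inter (isClosed_iInter fun i => ?_)
  exact (isClosed_discrete {qq : Q × Q | qq.2 ∈ A.trans qq.1 (w i)}).preimage
    (show Continuous fun p : ℕ → Q => (p i, p (i + 1)) by fun_prop)

theorem continuous_profile [TopologicalSpace Q] [DiscreteTopology Q] : Continuous A.profile :=
  continuous_pi fun i => continuous_of_discreteTopology.comp (continuous_apply i)

theorem exists_isAcceptingRun_profile_eq_lexGreedy [Finite Q]
    (hne : ∃ p, A.IsAcceptingRun w p) :
    ∃ p, A.IsAcceptingRun w p ∧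
      A.profile p = lexGreedy (A.profile '' {p | A.IsAcceptingRun w p}) := by
  let _ : TopologicalSpace Q := ⊥
  have : DiscreteTopology Q := ⟨rfl⟩
  set S := A.profile '' {p | A.IsAcceptingRun w p}
  have hS : S.Nonempty := Set.Nonempty.image A.profile hne
  -- the profiles of the limits of accepting runs form a closed set, by compactness of `ℕ → Q`
  obtain ⟨p, hp, hprof⟩ : lexGreedy S ∈ A.profile '' closure {p | A.IsAcceptingRun w p} := by
    rw [← (continuous_profile.isClosedMap).closure_image_eq_of_continuous continuous_profile]
    exact lexGreedy_mem_closure hS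
  have hrun : A.IsRun w p :=
    closure_minimal (fun q hq => hq.1) isClosed_setOf_isRun hp
  refine ⟨p, ⟨hrun, ?_⟩, hprof⟩
  have := frequently_lexGreedy hS (by rintro _ ⟨q, hq, rfl⟩; exact hq.2)
  simpa [← hprof, profile] using this

end NBW

/-- among the accepting paths there is one with lexicographically
maximal (infinite) profile. -/
theorem stmt6 {Q σ : Type} [Finite Q] (A : NBW Q σ) (w : ℕ → σ)
    (hne : ∃ π : ℕ → Q × ℕ, A.AcceptingPath (A.Edge w) π) :
    ∃ π : ℕ → Q × ℕ, A.AcceptingPath (A.Edge w) π ∧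
      ∀ π' : ℕ → Q × ℕ, A.AcceptingPath (A.Edge w) π' →
        ((fun i => A.acc (π' i).1) = (fun i => A.acc (π i).1) ∨
         ∃ n, (∀ m, m < n → A.acc (π' m).1 = A.acc (π m).1) ∧
           A.acc (π' n).1 < A.acc (π n).1) := by
  obtain ⟨π₀, hπ₀⟩ := hne
  obtain ⟨p, hp, hprof⟩ :=
    NBW.exists_isAcceptingRun_profile_eq_lexGreedy ⟨_, (NBW.acceptingPath_edge_iff.1 hπ₀).1⟩
  refine ⟨fun i => (p i, i), NBW.acceptingPath_edge_iff.2 ⟨hp, fun _ => rfl⟩, fun π' hπ' => ?_⟩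
  have hle : toLex (fun i => A.acc (π' i).1) ≤ toLex (A.profile p) :=
    hprof ▸ toLex_le_lexGreedy ⟨_, (NBW.acceptingPath_edge_iff.1 hπ').1, rfl⟩
  -- `<` on `Lex (ℕ → Bool)` is by definition the first-difference comparison of the statement
  exact (le_iff_eq_or_lt.1 hle).imp toLex_inj.1 id
end

section
/- The labeling λ^k is well defined: for any two nodes u, u' on the same level i with equal profiles (u ≈_i u'), λ^k(u) = λ^k(u'). -/
/-!
Induct on the level. At levels `≤ k` every label is `⊤`. A node `v` at a higher level has a
`G'`-parent `u` with `h v = h u ++ [acc v]`: the predecessor on a lexicographically maximal run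
to `v` carries a maximal profile itself, and no other predecessor can beat it, since splicing a
better run to that predecessor would beat `h v`. Hence equal profiles at level `i + 1` give equal
acceptance bits (so both nodes are `F`-nodes, labelled `⊥`, or neither is) and `G'`-parents with
equal profiles, whose labels agree by induction and are inherited.
-/

theorem List.Lex.append_of_length_eq {α : Type*} {r : α → α → Prop} {a b : List α}
    (hab : List.Lex r a b) (hlen : a.length = b.length) (l l' : List α) :
    List.Lex r (a ++ l) (b ++ l') := by
  induction hab with
  | nil => simp at hlen
  | cons _ ih => exact .cons (ih (by simpa using hlen))
  | rel hr => exact .rel hr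

theorem ProfLe.not_profLt {a b : List Bool} (hab : ProfLe a b) : ¬ ProfLt b a := by
  rcases hab with rfl | hab
  · exact List.lt_irrefl a
  · exact List.lt_asymm hab

namespace NBW

variable {Q σ : Type} {A : NBW Q σ} {w : ℕ → σ} {h : Q × ℕ → List Bool}

theorem profileOf_length (p : ℕ → Q) (n : ℕ) :
    (A.profileOf p n).length = n + 1 := by
  simp [profileOf]

theorem profileOf_succ (p : ℕ → Q) (n : ℕ) :
    A.profileOf p (n + 1) = A.profileOf p n ++ [A.acc (p (n + 1))] := by
  simp [profileOf, List.range_succ]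

theorem profileOf_congr {p q : ℕ → Q} {n : ℕ} (hpq : ∀ j ≤ n, p j = q j) :
    A.profileOf p n = A.profileOf q n :=
  List.map_congr_left fun j hj => by
    rw [hpq j (Nat.lt_succ_iff.mp (List.mem_range.mp hj))]

theorem FinRunTo.snoc {q : ℕ → Q} {x y : Q} {i : ℕ} (hq : A.FinRunTo w q (x, i))
    (hy : y ∈ A.trans x (w i)) :
    ∃ r, A.FinRunTo w r (y, i + 1) ∧ A.profileOf r (i + 1) = A.profileOf q i ++ [A.acc y] := by
  obtain ⟨hq0, hqstep, hqi⟩ := hq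
  let r : ℕ → Q := fun j => if j ≤ i then q j else y
  have hri : A.profileOf r i = A.profileOf q i := profileOf_congr fun j hj => if_pos hj
  refine ⟨r, ⟨by simpa [r] using hq0, fun j hj => ?_, by simp [r]⟩, ?_⟩
  · rcases Nat.lt_succ_iff_lt_or_eq.mp hj with hj | rfl
    · simpa [r, hj.le, Nat.succ_le_of_lt hj] using hqstep j hj
    · simpa [r, hqi] using hy
  · rw [profileOf_succ, hri]
    simp [r]

theorem IsProfileFun.length_eq (hprof : A.IsProfileFun w h) {v : Q × ℕ} (hv : A.InDag w v) :
    (h v).length = v.2 + 1 := by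
  obtain ⟨⟨p, -, hpv⟩, -⟩ := hprof v hv
  rw [← hpv, profileOf_length]

theorem IsProfileFun.snd_eq_of_eq (hprof : A.IsProfileFun w h) {u u' : Q × ℕ}
    (hu : A.InDag w u) (hu' : A.InDag w u') (heq : h u = h u') : u.2 = u'.2 := by
  have hlen := hprof.length_eq hu
  rw [heq, hprof.length_eq hu'] at hlen
  omega

theorem IsProfileFun.append_profLe_of_edge (hprof : A.IsProfileFun w h) {u v : Q × ℕ}
    (huv : A.Edge w u v) : ProfLe (h u ++ [A.acc v.1]) (h v) := by
  obtain ⟨hu, hlev, htrans⟩ := huv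
  obtain ⟨⟨q, hq, hqu⟩, -⟩ := hprof u hu
  obtain ⟨r, hr, hru⟩ := FinRunTo.snoc (y := v.1) hq htrans
  have hrv : A.FinRunTo w r v := by rw [← hlev] at hr; exact hr
  have hmax := (hprof v ⟨r, hrv⟩).2 r hrv
  rwa [hlev, hru, hqu] at hmax

theorem IsProfileFun.exists_edge'_parent (hprof : A.IsProfileFun w h) {v : Q × ℕ} {i : ℕ}
    (hv : A.InDag w v) (hvi : v.2 = i + 1) :
    ∃ u, A.Edge' w h u v ∧ h v = h u ++ [A.acc v.1] := by
  obtain ⟨⟨p, hp, hpv⟩, -⟩ := hprof v hv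
  have hpu : A.FinRunTo w p (p i, i) := ⟨hp.1, fun j hj => hp.2.1 j (by omega), rfl⟩
  have hpi : p (i + 1) = v.1 := by rw [← hvi]; exact hp.2.2
  have huv : A.Edge w (p i, i) v := ⟨⟨p, hpu⟩, hvi, hpi ▸ hp.2.1 i (by omega)⟩
  have hvp : h v = A.profileOf p i ++ [A.acc v.1] := by
    rw [← hpv, hvi, profileOf_succ, hpi]
  have not_lt : ∀ u', A.Edge w u' v → ¬ ProfLt (A.profileOf p i) (h u') := by
    intro u' hu'v hlt
    have hlen : (A.profileOf p i).length = (h u').length := by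
      rw [profileOf_length, hprof.length_eq hu'v.1]; have := hu'v.2.1; omega
    refine (hprof.append_profLe_of_edge hu'v).not_profLt ?_
    rw [hvp]
    exact hlt.append_of_length_eq hlen _ _
  have hu : h (p i, i) = A.profileOf p i :=
    (((hprof _ huv.1).2 p hpu).resolve_right (not_lt _ huv)).symm
  exact ⟨(p i, i), ⟨huv, fun u' hu'v => hu ▸ not_lt u' hu'v⟩, hu ▸ hvp⟩

end NBW

theorem stmt10_general {Q σ : Type} (A : NBW Q σ) (w : ℕ → σ) (h : Q × ℕ → List Bool)
    (hprof : A.IsProfileFun w h) (k : ℕ) (lam : Q × ℕ → Bool)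
    (hlam : A.IsRetroLabeling w h k lam)
    (u u' : Q × ℕ) (hu : A.InDag w u) (hu' : A.InDag w u')
    (heq : h u = h u') :
    lam u = lam u' := by
  obtain ⟨hlow, hF, hinherit⟩ := hlam
  have hlev := hprof.snd_eq_of_eq hu hu' heq
  induction hn : u.2 generalizing u u' with
  | zero => rw [hlow u hu (by omega), hlow u' hu' (by omega)]
  | succ i ih =>
    by_cases hik : i + 1 ≤ k
    · rw [hlow u hu (by omega), hlow u' hu' (by omega)]
    obtain ⟨par, hpar, hpar_prof⟩ := hprof.exists_edge'_parent hu hn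
    obtain ⟨par', hpar', hpar'_prof⟩ := hprof.exists_edge'_parent hu' (hlev ▸ hn)
    obtain ⟨hpar_eq, hacc⟩ := List.append_inj' (hpar_prof.symm.trans (heq.trans hpar'_prof)) rfl
    have hacc' : A.acc u'.1 = A.acc u.1 := (List.singleton_inj.mp hacc).symm
    have hlev_par : par.2 = i := by have := hpar.1.2.1; omega
    have hlev_par' : par'.2 = i := by have := hpar'.1.2.1; omega
    cases hb : A.acc u.1
    · rw [hinherit par u (by omega) hb hpar, hinherit par' u' (by omega) (hacc'.trans hb) hpar']
      exact ih par par' hpar.1.1 hpar'.1.1 hpar_eq (hlev_par.trans hlev_par'.symm) hlev_par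
    · rw [hF u hu (by omega) hb, hF u' hu' (by omega) (hacc'.trans hb)]

/-- the labeling `λ^k` is well defined: profile-equivalent nodes
on the same level share a label. -/
theorem stmt10 {Q σ : Type} (A : NBW Q σ) (w : ℕ → σ) (h : Q × ℕ → List Bool)
    (hprof : A.IsProfileFun w h) (k : ℕ) (lam : Q × ℕ → Bool)
    (hlam : A.IsRetroLabeling w h k lam)
    (u u' : Q × ℕ) (hu : A.InDag w u) (hu' : A.InDag w u')
    (hlev : u.2 = u'.2) (heq : h u = h u') :
    lam u = lam u' :=
  stmt10_general A w h hprof k lam hlam u u' hu hu' heq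
end
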